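/- Let Θ be a Polish metric space, I ≥ 1 an integer, α > 0, γ > 0, κ ∈ (0, 1], G₀ a Borel probability measure on Θ whose topological support is all of Θ, and G₀₀ any Borel probability measure on Θ. On a common probability space let: (p_h)_{h≥1} be a sequence of stick-breaking weights with parameter γ; (τ_h)_{h≥1} be i.i.d. with law G₀₀; and for each i ∈ {1, …, I} let (w_{ih})_{h≥1} be a sequence of stick-breaking weights with parameter α, (B_{ih})_{h≥1} be i.i.d. Bernoulli(κ), (ξ_{ih})_{h≥1} be i.i.d. with law G₀, and (V_{ih})_{h≥1} be i.i.d. uniform on (0,1); assume all of these families are mutually independent. For each i, h let H_{ih} be the categorical index generated by V_{ih} and (p_h)_{h≥1}, set θ_{ih} = ξ_{ih} if B_{ih} = 1 and θ_{ih} = τ_{H_{ih}} if B_{ih} = 0, and define F_i = Σ_{h≥1} w_{ih} δ_{θ_{ih}}. Then the vector (F_1, …, F_I) has full weak support: for all Borel probability measures g_1, …, g_I on Θ and every ε > 0, P(d_LP(F_i, g_i) < ε for all i = 1, …, I) > 0. -/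

import Mathlib

/-! Since `κ > 0`, with positive probability the first `M` atoms of every `F_i` are drawn from
`G₀` rather than from the shared atoms `τ`, so the components decouple. Approximate each `g_i`
by `∑_{k<M} q_k δ_{x_k}` with positive weights of total mass in `[1 - δ, 1)`. Such weights are
the first `M` stick-breaking weights of some fractions in `(0, 1)`, and the Beta(1, α) law
charges every open subset of `(0, 1)`; hence `∑_{k<M} |w_{ik} - q_k| < δ`, `B_{ik} = 1` and
`d(ξ_{ik}, x_k) < δ` for all `k < M` each have positive probability, and by independence of the
families they hold for all `i` at once with positive probability. On that event the mass of
`F_i` beyond its first `M` atoms is at most `2δ`, so `d_LP(F_i, g_i) ≤ 4δ`. -/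

open MeasureTheory ProbabilityTheory TopologicalSpace

/-- The Beta(1, α) distribution on ℝ, with density `α (1 - x)^(α - 1)` on `(0, 1)`. -/
noncomputable def betaOneMeasure (α : ℝ) : Measure ℝ :=
  volume.withDensity fun x =>
    ENNReal.ofReal (Set.indicator (Set.Ioo (0 : ℝ) 1) (fun x => α * (1 - x) ^ (α - 1)) x)

/-- `w` is a sequence of stick-breaking weights with parameter `α`: `w_h = β_h ∏_{j<h} (1 - β_j)`
where the `β_h` are i.i.d. Beta(1, α) random variables. -/
def IsStickBreaking {Ω : Type*} [MeasurableSpace Ω] (P : Measure Ω) (α : ℝ)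
    (w : ℕ → Ω → ℝ) : Prop :=
  ∃ β : ℕ → Ω → ℝ,
    (∀ h, Measurable (β h)) ∧
    iIndepFun β P ∧
    (∀ h, Measure.map (β h) P = betaOneMeasure α) ∧
    (∀ h ω, w h ω = β h ω * ∏ j ∈ Finset.range h, (1 - β j ω))

/-- The categorical index generated by `V` and the weights `(p_h)`: the first index `h` such
that the partial sum `p_0 + ⋯ + p_h` exceeds `V`. -/
noncomputable def catIndex {Ω : Type*} (p : ℕ → Ω → ℝ) (V : Ω → ℝ) (ω : Ω) : ℕ :=
  sInf {h : ℕ | V ω < ∑ j ∈ Finset.range (h + 1), p j ω}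

section

open Set Metric Finset Filter Topology

theorem ae_betaOneMeasure_mem_Ioo (α : ℝ) : ∀ᵐ x ∂betaOneMeasure α, x ∈ Ioo (0 : ℝ) 1 := by
  rw [ae_iff, betaOneMeasure, withDensity_apply_eq_zero' (by measurability)]
  convert measure_empty (μ := volume)
  ext x
  by_cases hx : x ∈ Ioo (0 : ℝ) 1 <;> simp_all

theorem betaOneMeasure_pos_of_isOpen {α : ℝ} (hα : 0 < α) {U : Set ℝ} (hU : IsOpen U) {x : ℝ}
    (hxU : x ∈ U) (hx : x ∈ Ioo (0 : ℝ) 1) : 0 < betaOneMeasure α U := by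
  rw [pos_iff_ne_zero, betaOneMeasure, Ne, withDensity_apply_eq_zero' (by measurability)]
  refine mt (measure_mono_null fun y hy => ⟨?_, hy.2⟩) <|
    (isOpen_Ioo.inter hU).measure_ne_zero volume ⟨x, hx, hxU⟩
  show _ ≠ _
  rw [indicator_of_mem hy.1]
  exact (ENNReal.ofReal_pos.2 (mul_pos hα (Real.rpow_pos_of_pos (by linarith [hy.1.2]) _))).ne'

def stickBreaking (β : ℕ → ℝ) (k : ℕ) : ℝ := β k * ∏ j ∈ range k, (1 - β j)

theorem continuous_stickBreaking : Continuous stickBreaking :=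
  continuous_pi fun k => by unfold stickBreaking; fun_prop

theorem sum_range_stickBreaking (β : ℕ → ℝ) (n : ℕ) :
    ∑ k ∈ range n, stickBreaking β k = 1 - ∏ j ∈ range n, (1 - β j) := by
  induction n with
  | zero => simp
  | succ n ih => rw [sum_range_succ, prod_range_succ, ih, stickBreaking]; ring

theorem stickBreaking_nonneg {β : ℕ → ℝ} (hβ : ∀ j, β j ∈ Ioo (0 : ℝ) 1) (k : ℕ) :
    0 ≤ stickBreaking β k :=
  mul_nonneg (hβ k).1.le (prod_nonneg fun j _ => by linarith [(hβ j).2])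

theorem sum_range_stickBreaking_le_one {β : ℕ → ℝ} (hβ : ∀ j, β j ∈ Ioo (0 : ℝ) 1) (n : ℕ) :
    ∑ k ∈ range n, stickBreaking β k ≤ 1 := by
  rw [sum_range_stickBreaking, sub_le_self_iff]
  exact prod_nonneg fun j _ => by linarith [(hβ j).2]

theorem exists_stickBreaking_eq {M : ℕ} {q : ℕ → ℝ} (hq : ∀ k < M, 0 < q k)
    (hq1 : ∑ k ∈ range M, q k < 1) :
    ∃ b : ℕ → ℝ, (∀ k, b k ∈ Ioo (0 : ℝ) 1) ∧ ∀ k < M, stickBreaking b k = q k := by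
  have hrest : ∀ k < M, q k < 1 - ∑ j ∈ range k, q j := by
    intro k hk
    have := sum_le_sum_of_subset_of_nonneg (range_subset_range.2 hk)
      fun j hj _ => (hq j (by simp at hj; omega)).le
    rw [sum_range_succ] at this
    linarith
  set b : ℕ → ℝ := fun k => if k < M then q k / (1 - ∑ j ∈ range k, q j) else 1 / 2
  refine ⟨b, fun k => ?_, fun k hk => ?_⟩
  · by_cases hk : k < M
    · have hpos : 0 < 1 - ∑ j ∈ range k, q j := (hq k hk).trans (hrest k hk)
      simp only [b, if_pos hk]
      exact ⟨div_pos (hq k hk) hpos, (div_lt_one hpos).2 (hrest k hk)⟩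
    · simp only [b, if_neg hk]
      norm_num
  · induction k using Nat.strong_induction_on with
    | _ k ih =>
      have hsum : ∑ j ∈ range k, stickBreaking b j = ∑ j ∈ range k, q j :=
        sum_congr rfl fun j hj => ih j (mem_range.1 hj) ((mem_range.1 hj).trans hk)
      rw [sum_range_stickBreaking] at hsum
      have hprod : ∏ j ∈ range k, (1 - b j) = 1 - ∑ j ∈ range k, q j := by linarith
      rw [stickBreaking, hprod]
      simp only [b, if_pos hk]
      exact div_mul_cancel₀ _ (by linarith [hrest k hk, hq k hk])

namespace ProbabilityTheory

variable {Ω : Type*} [MeasurableSpace Ω] {P : Measure Ω}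

theorem iIndepFun.measure_pi_preimage_pos {ι : Type*} {E : ι → Type*}
    [∀ i, MeasurableSpace (E i)] {X : ∀ i, Ω → E i} (hX : iIndepFun X P) {S : Finset ι}
    {U : ∀ i, Set (E i)} (hU : ∀ i ∈ S, MeasurableSet (U i))
    (hpos : ∀ i ∈ S, 0 < P (X i ⁻¹' U i)) :
    0 < P ((fun ω i => X i ω) ⁻¹' (S : Set ι).pi U) :=
  calc 0 < ∏ i ∈ S, P (X i ⁻¹' U i) := CanonicallyOrderedAdd.prod_pos.2 hpos
    _ = P (⋂ i ∈ S, X i ⁻¹' U i) := (hX.meas_biInter fun i hi => ⟨U i, hU i hi, rfl⟩).symm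
    _ ≤ P ((fun ω i => X i ω) ⁻¹' (S : Set ι).pi U) :=
        measure_mono fun _ hω i hi => mem_iInter₂.1 hω i hi

theorem iIndepFun.measure_preimage_pos_of_isOpen {ι : Type*} {E : ι → Type*}
    [∀ i, TopologicalSpace (E i)] [∀ i, MeasurableSpace (E i)] [∀ i, OpensMeasurableSpace (E i)]
    {X : ∀ i, Ω → E i} (hX : iIndepFun X P) {s : Set (∀ i, E i)} (hs : IsOpen s)
    {x : ∀ i, E i} (hx : x ∈ s) (hpos : ∀ i U, IsOpen U → x i ∈ U → 0 < P (X i ⁻¹' U)) :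
    0 < P ((fun ω i => X i ω) ⁻¹' s) := by
  obtain ⟨I, u, hu, hIs⟩ := isOpen_pi_iff.1 hs x hx
  exact (hX.measure_pi_preimage_pos (fun i hi => (hu i hi).1.measurableSet)
    fun i hi => hpos i _ (hu i hi).1 (hu i hi).2).trans_le (measure_mono (preimage_mono hIs))

theorem iIndep.measure_iInter_pos {ι : Type*} [Fintype ι] {m : ι → MeasurableSpace Ω}
    (h : iIndep m P) {s : ι → Set Ω} (hs : ∀ i, MeasurableSet[m i] (s i))
    (hpos : ∀ i, 0 < P (s i)) : 0 < P (⋂ i, s i) := by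
  rw [h.meas_iInter hs]
  exact CanonicallyOrderedAdd.prod_pos.2 fun i _ => hpos i

end ProbabilityTheory

namespace IsStickBreaking

variable {Ω : Type*} [MeasurableSpace Ω] {P : Measure Ω} {α : ℝ} {w : ℕ → Ω → ℝ}

theorem ae_nonneg_and_sum_range_le_one (hw : IsStickBreaking P α w) :
    ∀ᵐ ω ∂P, (∀ h, 0 ≤ w h ω) ∧ ∀ n, ∑ k ∈ range n, w k ω ≤ 1 := by
  obtain ⟨β, hβmeas, -, hβlaw, hwβ⟩ := hw
  have hβ : ∀ᵐ ω ∂P, ∀ j, β j ω ∈ Ioo (0 : ℝ) 1 := ae_all_iff.2 fun j =>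
    ae_of_ae_map (hβmeas j).aemeasurable ((hβlaw j).symm ▸ ae_betaOneMeasure_mem_Ioo α)
  filter_upwards [hβ] with ω hω
  simp only [hwβ]
  exact ⟨stickBreaking_nonneg hω, sum_range_stickBreaking_le_one hω⟩

theorem measure_sum_abs_sub_lt_pos (hα : 0 < α) (hw : IsStickBreaking P α w) {M : ℕ}
    {q : ℕ → ℝ} (hq : ∀ k < M, 0 < q k) (hq1 : ∑ k ∈ range M, q k < 1) {δ : ℝ} (hδ : 0 < δ) :
    0 < P {ω | ∑ k ∈ range M, |w k ω - q k| < δ} := by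
  obtain ⟨β, hβmeas, hβindep, hβlaw, hwβ⟩ := hw
  obtain ⟨b, hb, hbq⟩ := exists_stickBreaking_eq hq hq1
  have hs : IsOpen {v : ℕ → ℝ | ∑ k ∈ range M, |stickBreaking v k - q k| < δ} :=
    isOpen_lt (continuous_finsetSum _ fun k _ =>
      ((continuous_apply k).comp continuous_stickBreaking).sub continuous_const |>.abs)
      continuous_const
  have hbs : b ∈ {v : ℕ → ℝ | ∑ k ∈ range M, |stickBreaking v k - q k| < δ} := by
    rw [mem_ofPred_eq, sum_eq_zero fun k hk => by rw [hbq k (mem_range.1 hk), sub_self, abs_zero]]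
    exact hδ
  refine ((iIndepFun.measure_preimage_pos_of_isOpen (X := β) hβindep hs hbs
    fun k U hU hbU => ?_)).trans_eq ?_
  · rw [← Measure.map_apply (hβmeas k) hU.measurableSet, hβlaw k]
    exact betaOneMeasure_pos_of_isOpen hα hU hbU (hb k)
  · simp only [hwβ]
    rfl

end IsStickBreaking

namespace MeasureTheory

theorem Measure.sum_nat_eq_sum_range_add {Ω : Type*} [MeasurableSpace Ω] (μ : ℕ → Measure Ω)
    (M : ℕ) : Measure.sum μ = ∑ k ∈ range M, μ k + Measure.sum fun h => μ (h + M) := by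
  ext s hs
  rw [Measure.add_apply, Measure.sum_apply _ hs, Measure.sum_apply _ hs, Measure.finsetSum_apply]
  exact (ENNReal.summable.sum_add_tsum_nat_add' (f := fun h => μ h s)).symm

variable {Ω : Type*} [PseudoMetricSpace Ω] [MeasurableSpace Ω]

theorem levyProkhorovEDist_add_left_le (μ ν : Measure Ω) :
    levyProkhorovEDist (μ + ν) μ ≤ ν univ := by
  refine levyProkhorovEDist_le_of_forall _ _ _ fun ε B hε hε_top _ => ?_
  have hB : B ⊆ thickening ε.toReal B :=
    self_subset_thickening (ENNReal.toReal_pos (pos_of_gt hε).ne' hε_top.ne) B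
  rw [Measure.add_apply, Measure.add_apply]
  exact ⟨add_le_add (measure_mono hB) ((measure_mono (subset_univ B)).trans hε.le),
    (measure_mono hB).trans (le_self_add.trans le_self_add)⟩

theorem levyProkhorovEDist_le_ofReal_of_forall {μ ν : Measure Ω} {c : ℝ} (hc : 0 ≤ c)
    (h : ∀ r, c < r → ∀ B, MeasurableSet B →
      μ B ≤ ν (thickening r B) + ENNReal.ofReal r ∧ ν B ≤ μ (thickening r B) + ENNReal.ofReal r) :
    levyProkhorovEDist μ ν ≤ ENNReal.ofReal c := by
  refine levyProkhorovEDist_le_of_forall _ _ _ fun ε B hε hε_top hB => ?_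
  have := h _ ((ENNReal.ofReal_lt_iff_lt_toReal hc hε_top.ne).1 hε) B hB
  rwa [ENNReal.ofReal_toReal hε_top.ne] at this

theorem finsetSum_smul_dirac_apply_le {ι : Type*} (s : Finset ι) (a b : ι → ℝ) {x y : ι → Ω}
    {r : ℝ} (hxy : ∀ k ∈ s, dist (x k) (y k) < r) {B : Set Ω} (hB : MeasurableSet B) :
    (∑ k ∈ s, ENNReal.ofReal (a k) • Measure.dirac (x k)) B
      ≤ (∑ k ∈ s, ENNReal.ofReal (b k) • Measure.dirac (y k)) (thickening r B)
        + ENNReal.ofReal (∑ k ∈ s, |a k - b k|) := by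
  simp only [Measure.finsetSum_apply, Measure.smul_apply, smul_eq_mul]
  rw [ENNReal.ofReal_sum_of_nonneg fun k _ => abs_nonneg _, ← sum_add_distrib]
  refine sum_le_sum fun k hk => ?_
  by_cases hxB : x k ∈ B
  · have hyB : y k ∈ thickening r B :=
      mem_thickening_iff.2 ⟨x k, hxB, by rw [dist_comm]; exact hxy k hk⟩
    rw [Measure.dirac_apply_of_mem hxB, Measure.dirac_apply_of_mem hyB, mul_one, mul_one]
    exact (ENNReal.ofReal_le_ofReal (by linarith [le_abs_self (a k - b k)])).trans
      ENNReal.ofReal_add_le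
  · rw [Measure.dirac_apply' _ hB, indicator_of_notMem hxB, mul_zero]
    exact bot_le

theorem levyProkhorovEDist_finsetSum_dirac_le {ι : Type*} (s : Finset ι) {a b : ι → ℝ}
    {x y : ι → Ω} {c : ℝ} (hxy : ∀ k ∈ s, dist (x k) (y k) ≤ c)
    (hab : ∑ k ∈ s, |a k - b k| ≤ c) :
    levyProkhorovEDist (∑ k ∈ s, ENNReal.ofReal (a k) • Measure.dirac (x k))
      (∑ k ∈ s, ENNReal.ofReal (b k) • Measure.dirac (y k)) ≤ ENNReal.ofReal c := by
  have hc : 0 ≤ c := (sum_nonneg fun k _ => abs_nonneg _).trans hab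
  refine levyProkhorovEDist_le_ofReal_of_forall hc fun r hr B hB => ⟨?_, ?_⟩
  · exact (finsetSum_smul_dirac_apply_le s a b (fun k hk => (hxy k hk).trans_lt hr) hB).trans
      (add_le_add le_rfl (ENNReal.ofReal_le_ofReal (hab.trans hr.le)))
  · refine (finsetSum_smul_dirac_apply_le s b a
      (fun k hk => (dist_comm (y k) (x k) ▸ hxy k hk).trans_lt hr) hB).trans
      (add_le_add le_rfl (ENNReal.ofReal_le_ofReal ?_))
    simpa only [abs_sub_comm] using hab.trans hr.le

theorem levyProkhorovEDist_finsetSum_le {ι : Type*} (s : Finset ι) {μ ν : ι → Measure Ω}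
    {c : ℝ} (hc : 0 ≤ c)
    (h : ∀ k ∈ s, ∀ r, c < r → ∀ B, MeasurableSet B →
      μ k B ≤ ν k (thickening r B) ∧ ν k B ≤ μ k (thickening r B)) :
    levyProkhorovEDist (∑ k ∈ s, μ k) (∑ k ∈ s, ν k) ≤ ENNReal.ofReal c := by
  refine levyProkhorovEDist_le_ofReal_of_forall hc fun r hr B hB => ?_
  simp only [Measure.finsetSum_apply]
  exact ⟨le_add_right (sum_le_sum fun k hk => (h k hk r hr B hB).1),
    le_add_right (sum_le_sum fun k hk => (h k hk r hr B hB).2)⟩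

theorem restrict_smul_dirac_le_thickening {μ : Measure Ω} {A : Set Ω} {x : Ω} {c r : ℝ}
    (hA : ∀ y ∈ A, dist y x ≤ c) (hr : c < r) {B : Set Ω} (hB : MeasurableSet B) :
    μ.restrict A B ≤ (μ A • Measure.dirac x) (thickening r B) ∧
      (μ A • Measure.dirac x) B ≤ μ.restrict A (thickening r B) := by
  rw [Measure.smul_apply, Measure.smul_apply, smul_eq_mul, smul_eq_mul]
  constructor
  · rw [Measure.restrict_apply hB]
    rcases (B ∩ A).eq_empty_or_nonempty with hBA | ⟨y, hyB, hyA⟩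
    · rw [hBA, measure_empty]
      exact bot_le
    · have hx : x ∈ thickening r B :=
        mem_thickening_iff.2 ⟨y, hyB, by rw [dist_comm]; exact (hA y hyA).trans_lt hr⟩
      rw [Measure.dirac_apply_of_mem hx, mul_one]
      exact measure_mono inter_subset_right
  · by_cases hxB : x ∈ B
    · rw [Measure.dirac_apply_of_mem hxB, mul_one, Measure.restrict_apply_superset]
      exact fun y hy => mem_thickening_iff.2 ⟨x, hxB, (hA y hy).trans_lt hr⟩
    · rw [Measure.dirac_apply' _ hB, indicator_of_notMem hxB, mul_zero]
      exact bot_le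

variable [OpensMeasurableSpace Ω]

theorem levyProkhorovEDist_sum_dirac_le {w : ℕ → ℝ} {θ x : ℕ → Ω} {q : ℕ → ℝ} {M : ℕ} {c : ℝ}
    (hw0 : ∀ k, 0 ≤ w k) (hw1 : ∀ n, ∑ k ∈ range n, w k ≤ 1)
    (hθx : ∀ k < M, dist (θ k) (x k) ≤ c) (hwq : ∑ k ∈ range M, |w k - q k| ≤ c) :
    levyProkhorovEDist (Measure.sum fun h => ENNReal.ofReal (w h) • Measure.dirac (θ h))
      (∑ k ∈ range M, ENNReal.ofReal (q k) • Measure.dirac (x k))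
      ≤ ENNReal.ofReal (1 - ∑ k ∈ range M, w k) + ENNReal.ofReal c := by
  set F : ℕ → Measure Ω := fun h => ENNReal.ofReal (w h) • Measure.dirac (θ h)
  have htail : (Measure.sum fun h => F (h + M)) univ
      ≤ ENNReal.ofReal (1 - ∑ k ∈ range M, w k) := by
    rw [Measure.sum_apply _ MeasurableSet.univ]
    refine ENNReal.tsum_le_of_sum_range_le fun n => ?_
    simp only [F, Measure.smul_apply, measure_univ, smul_eq_mul, mul_one]
    rw [← ENNReal.ofReal_sum_of_nonneg fun k _ => hw0 _]
    refine ENNReal.ofReal_le_ofReal ?_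
    have := hw1 (M + n)
    rw [sum_range_add] at this
    simp only [add_comm M] at this
    linarith
  calc _ ≤ levyProkhorovEDist (Measure.sum F) (∑ k ∈ range M, F k)
        + levyProkhorovEDist (∑ k ∈ range M, F k)
          (∑ k ∈ range M, ENNReal.ofReal (q k) • Measure.dirac (x k)) :=
        levyProkhorovEDist_triangle _ _ _
    _ ≤ _ := by
        refine add_le_add ?_ (levyProkhorovEDist_finsetSum_dirac_le (range M)
          (fun k hk => hθx k (mem_range.1 hk)) hwq)
        rw [Measure.sum_nat_eq_sum_range_add F M]
        exact (levyProkhorovEDist_add_left_le _ _).trans htail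

theorem levyProkhorovDist_sum_dirac_lt {g : Measure Ω} {w : ℕ → ℝ} {θ x : ℕ → Ω} {q : ℕ → ℝ}
    {M : ℕ} {δ ε : ℝ}
    (hqg : levyProkhorovEDist (∑ k ∈ range M, ENNReal.ofReal (q k) • Measure.dirac (x k)) g
      ≤ ENNReal.ofReal δ) (hq : 1 - δ ≤ ∑ k ∈ range M, q k)
    (hw0 : ∀ k, 0 ≤ w k) (hw1 : ∀ n, ∑ k ∈ range n, w k ≤ 1)
    (hθx : ∀ k < M, dist (θ k) (x k) ≤ δ) (hwq : ∑ k ∈ range M, |w k - q k| ≤ δ)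
    (hδε : 4 * δ < ε) :
    levyProkhorovDist (Measure.sum fun h => ENNReal.ofReal (w h) • Measure.dirac (θ h)) g < ε := by
  have hδ : 0 ≤ δ := (sum_nonneg fun k _ => abs_nonneg _).trans hwq
  have hmass : 1 - ∑ k ∈ range M, w k ≤ 2 * δ := by
    have : ∑ k ∈ range M, q k - ∑ k ∈ range M, w k ≤ ∑ k ∈ range M, |w k - q k| := by
      rw [← sum_sub_distrib]
      exact sum_le_sum fun k _ => by rw [abs_sub_comm]; exact le_abs_self _
    linarith
  refine (ENNReal.toReal_le_of_le_ofReal (by linarith) ?_).trans_lt hδε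
  calc _ ≤ levyProkhorovEDist (Measure.sum fun h => ENNReal.ofReal (w h) • Measure.dirac (θ h))
          (∑ k ∈ range M, ENNReal.ofReal (q k) • Measure.dirac (x k))
        + levyProkhorovEDist (∑ k ∈ range M, ENNReal.ofReal (q k) • Measure.dirac (x k)) g :=
        levyProkhorovEDist_triangle _ _ _
    _ ≤ ENNReal.ofReal (2 * δ) + ENNReal.ofReal δ + ENNReal.ofReal δ := by
        refine add_le_add ((levyProkhorovEDist_sum_dirac_le hw0 hw1 hθx hwq).trans ?_) hqg
        gcongr
    _ = ENNReal.ofReal (4 * δ) := by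
        rw [← ENNReal.ofReal_add (by positivity) hδ, ← ENNReal.ofReal_add (by positivity) hδ]
        ring_nf

theorem levyProkhorovEDist_finsetSum_cells_le (g : Measure Ω) {A : ℕ → Set Ω} {x : ℕ → Ω}
    {η : ℝ} (hη : 0 ≤ η) (hAmeas : ∀ n, MeasurableSet (A n))
    (hAdisj : Pairwise (Function.onFun Disjoint A)) (hAx : ∀ n, ∀ y ∈ A n, dist y (x n) ≤ η)
    (N : ℕ) :
    levyProkhorovEDist (∑ n ∈ range N, g (A n) • Measure.dirac (x n)) g
      ≤ ENNReal.ofReal η + g (⋃ n ∈ range N, A n)ᶜ := by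
  have hS : MeasurableSet (⋃ n ∈ range N, A n) :=
    (range N).measurableSet_biUnion fun n _ => hAmeas n
  calc _ ≤ levyProkhorovEDist (∑ n ∈ range N, g (A n) • Measure.dirac (x n))
          (g.restrict (⋃ n ∈ range N, A n))
        + levyProkhorovEDist (g.restrict (⋃ n ∈ range N, A n)) g :=
        levyProkhorovEDist_triangle _ _ _
    _ ≤ _ := by
        refine add_le_add ?_ ?_
        · rw [Measure.restrict_biUnion_finset (fun n _ m _ hnm => hAdisj hnm) hAmeas,
            Measure.sum_coe_finset (range N) fun n => g.restrict (A n), levyProkhorovEDist_comm]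
          exact levyProkhorovEDist_finsetSum_le _ hη fun n _ r hr B hB =>
            restrict_smul_dirac_le_thickening (hAx n) hr hB
        · rw [levyProkhorovEDist_comm]
          nth_rw 1 [← Measure.restrict_add_restrict_compl (μ := g) hS]
          exact (levyProkhorovEDist_add_left_le _ _).trans (Measure.restrict_apply_univ _).le

theorem exists_finsetSum_dirac_levyProkhorovEDist_le [SeparableSpace Ω] (g : Measure Ω)
    [IsProbabilityMeasure g] {η : ℝ} (hη : 0 < η) :
    ∃ (N : ℕ) (x : ℕ → Ω) (a : ℕ → ℝ), 0 < N ∧ (∀ k, 0 ≤ a k) ∧ ∑ k ∈ range N, a k ≤ 1 ∧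
      1 - η ≤ ∑ k ∈ range N, a k ∧
      levyProkhorovEDist (∑ k ∈ range N, ENNReal.ofReal (a k) • Measure.dirac (x k)) g
        ≤ ENNReal.ofReal (2 * η) := by
  have := nonempty_of_isProbabilityMeasure g
  obtain ⟨x, hx⟩ := exists_dense_seq Ω
  set A := disjointed fun n => ball (x n) η
  have hAmeas : ∀ n, MeasurableSet (A n) := MeasurableSet.disjointed fun n => measurableSet_ball
  have hAdisj : Pairwise (Function.onFun Disjoint A) := disjoint_disjointed _
  have hAcover : ⋃ n, A n = univ := by
    rw [iUnion_disjointed]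
    exact eq_univ_of_forall fun y => mem_iUnion.2 (hx.exists_dist_lt y hη)
  have hlim : Tendsto (fun N => ∑ n ∈ range N, g (A n)) atTop (𝓝 1) := by
    rw [← measure_univ (μ := g), ← hAcover, measure_iUnion hAdisj hAmeas]
    exact ENNReal.tendsto_nat_tsum _
  obtain ⟨N, hN, hN0⟩ := ((hlim.eventually (lt_mem_nhds (ENNReal.sub_lt_self ENNReal.one_ne_top
    one_ne_zero (ENNReal.ofReal_pos.2 hη).ne'))).and (eventually_gt_atTop 0)).exists
  set S := ⋃ n ∈ range N, A n
  have hSmeas : MeasurableSet S := (range N).measurableSet_biUnion fun n _ => hAmeas n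
  have hgS : g S = ∑ n ∈ range N, g (A n) :=
    measure_biUnion_finset (fun n _ m _ hnm => hAdisj hnm) fun n _ => hAmeas n
  have hgSc : g Sᶜ ≤ ENNReal.ofReal η := by
    rw [prob_compl_eq_one_sub hSmeas, tsub_le_iff_left, hgS]
    exact tsub_le_iff_right.1 hN.le
  have hsum : ∑ n ∈ range N, (g (A n)).toReal = (g S).toReal := by
    rw [hgS, ENNReal.toReal_sum fun n _ => measure_ne_top g _]
  have hsum_compl : (g S).toReal + (g Sᶜ).toReal = 1 := by
    rw [← ENNReal.toReal_add (measure_ne_top g _) (measure_ne_top g _),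
      prob_add_prob_compl hSmeas, ENNReal.toReal_one]
  refine ⟨N, x, fun n => (g (A n)).toReal, hN0, fun n => ENNReal.toReal_nonneg, ?_, ?_, ?_⟩
  · rw [hsum]
    linarith [(g Sᶜ).toReal_nonneg]
  · rw [hsum]
    linarith [ENNReal.toReal_le_of_le_ofReal hη.le hgSc]
  · simp only [ENNReal.ofReal_toReal (measure_ne_top g _)]
    refine (levyProkhorovEDist_finsetSum_cells_le g hη.le hAmeas hAdisj
      (fun n y hy => (disjointed_subset _ n hy).le) N).trans ?_
    rw [two_mul, ENNReal.ofReal_add hη.le hη.le]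
    exact add_le_add le_rfl hgSc

theorem exists_finsetSum_dirac_pos_levyProkhorovEDist_le [SeparableSpace Ω] (g : Measure Ω)
    [IsProbabilityMeasure g] {δ : ℝ} (hδ : 0 < δ) :
    ∃ (M : ℕ) (x : ℕ → Ω) (q : ℕ → ℝ), (∀ k < M, 0 < q k) ∧ ∑ k ∈ range M, q k < 1 ∧
      1 - δ ≤ ∑ k ∈ range M, q k ∧
      levyProkhorovEDist (∑ k ∈ range M, ENNReal.ofReal (q k) • Measure.dirac (x k)) g
        ≤ ENNReal.ofReal δ := by
  set η := min (δ / 4) (1 / 2)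
  have hη : 0 < η := lt_min (by positivity) (by norm_num)
  have hηδ : η ≤ δ / 4 := min_le_left _ _
  have hη1 : η ≤ 1 / 2 := min_le_right _ _
  obtain ⟨N, x, a, hN, ha0, ha1, haη, hag⟩ := exists_finsetSum_dirac_levyProkhorovEDist_le g hη
  set q : ℕ → ℝ := fun k => (1 - η) * a k + η / (2 * N)
  have hNR : (0 : ℝ) < N := Nat.cast_pos.2 hN
  have hq0 : 0 < η / (2 * N) := by positivity
  have hqsum : ∑ k ∈ range N, q k = (1 - η) * ∑ k ∈ range N, a k + η / 2 := by
    simp only [q, sum_add_distrib, ← mul_sum, sum_const, card_range, nsmul_eq_mul]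
    field_simp
  have hqa : ∑ k ∈ range N, |q k - a k| ≤ 2 * η := by
    calc ∑ k ∈ range N, |q k - a k| ≤ ∑ k ∈ range N, (η / (2 * N) + η * a k) :=
          sum_le_sum fun k _ => by
            have : 0 ≤ η * a k := mul_nonneg hη.le (ha0 k)
            exact abs_le.2 ⟨by simp only [q]; linarith, by simp only [q]; linarith⟩
      _ = η / 2 + η * ∑ k ∈ range N, a k := by
          rw [sum_add_distrib, ← mul_sum, sum_const, card_range, nsmul_eq_mul]
          field_simp
      _ ≤ 2 * η := by nlinarith
  refine ⟨N, x, q, fun k _ => add_pos_of_nonneg_of_pos (mul_nonneg (by linarith) (ha0 k)) hq0,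
    ?_, ?_, ?_⟩
  · rw [hqsum]
    nlinarith
  · rw [hqsum]
    nlinarith
  · calc _ ≤ levyProkhorovEDist (∑ k ∈ range N, ENNReal.ofReal (q k) • Measure.dirac (x k))
            (∑ k ∈ range N, ENNReal.ofReal (a k) • Measure.dirac (x k))
          + levyProkhorovEDist (∑ k ∈ range N, ENNReal.ofReal (a k) • Measure.dirac (x k)) g :=
          levyProkhorovEDist_triangle _ _ _
      _ ≤ ENNReal.ofReal (2 * η) + ENNReal.ofReal (2 * η) :=
          add_le_add (levyProkhorovEDist_finsetSum_dirac_le _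
            (fun k _ => (dist_self (x k)).trans_le (by positivity)) hqa) hag
      _ ≤ ENNReal.ofReal δ := by
          rw [← ENNReal.ofReal_add (by positivity) (by positivity)]
          exact ENNReal.ofReal_le_ofReal (by linarith)

end MeasureTheory

end

theorem semiHDP_full_weak_support_general
    (Θ : Type*) [MetricSpace Θ] [SeparableSpace Θ]
    [MeasurableSpace Θ] [BorelSpace Θ]
    (I : ℕ)
    {Ω : Type*} [MeasurableSpace Ω] (P : Measure Ω) [IsProbabilityMeasure P]
    (α : ℝ) (hα : 0 < α) (κ : ℝ) (hκ0 : 0 < κ)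
    (G₀ : Measure Θ)
    (hG₀supp : ∀ U : Set Θ, IsOpen U → U.Nonempty → 0 < G₀ U)
    (p : ℕ → Ω → ℝ) (τ : ℕ → Ω → Θ)
    (w : Fin I → ℕ → Ω → ℝ) (B : Fin I → ℕ → Ω → Bool)
    (ξ : Fin I → ℕ → Ω → Θ) (V : Fin I → ℕ → Ω → ℝ)
    (hw : ∀ i, IsStickBreaking P α (w i))
    (hBiid : ∀ i, iIndepFun (B i) P)
    (hBlaw : ∀ i h, P {ω | B i h ω = true} = ENNReal.ofReal κ)
    (hξmeas : ∀ i h, Measurable (ξ i h))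
    (hξiid : ∀ i, iIndepFun (ξ i) P)
    (hξlaw : ∀ i h, Measure.map (ξ i h) P = G₀)
    (hindep : iIndep
      (Sum.elim
        ![MeasurableSpace.comap (fun ω => fun h => p h ω) inferInstance,
          MeasurableSpace.comap (fun ω => fun h => τ h ω) inferInstance]
        (fun iv : Fin I × Fin 4 =>
          ![MeasurableSpace.comap (fun ω => fun h => w iv.1 h ω) inferInstance,
            MeasurableSpace.comap (fun ω => fun h => B iv.1 h ω) inferInstance,
            MeasurableSpace.comap (fun ω => fun h => ξ iv.1 h ω) inferInstance,
            MeasurableSpace.comap (fun ω => fun h => V iv.1 h ω) inferInstance] iv.2)) P)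
    (θ : Fin I → ℕ → Ω → Θ)
    (hθ : ∀ i h ω, θ i h ω =
      if B i h ω = true then ξ i h ω else τ (catIndex p (V i h) ω) ω) :
    ∀ g : Fin I → Measure Θ, (∀ i, IsProbabilityMeasure (g i)) → ∀ ε : ℝ, 0 < ε →
      0 < P {ω | ∀ i : Fin I, levyProkhorovDist
        (Measure.sum fun h : ℕ => ENNReal.ofReal (w i h ω) • Measure.dirac (θ i h ω))
        (g i) < ε} := by
  intro g hg ε hε
  have hδ : 0 < ε / 5 := by positivity
  choose M x q hq hq1 hqδ hqg using fun i =>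
    have := hg i
    exists_finsetSum_dirac_pos_levyProkhorovEDist_le (g i) hδ
  set E : Fin 2 ⊕ Fin I × Fin 4 → Set Ω := Sum.elim (fun _ => Set.univ) fun iv =>
    ![{ω | ∑ k ∈ Finset.range (M iv.1), |w iv.1 k ω - q iv.1 k| < ε / 5},
      (fun ω k => B iv.1 k ω) ⁻¹' (Finset.range (M iv.1) : Set ℕ).pi fun _ => {true},
      (fun ω k => ξ iv.1 k ω) ⁻¹'
        (Finset.range (M iv.1) : Set ℕ).pi fun k => Metric.ball (x iv.1 k) (ε / 5),
      Set.univ] iv.2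
  refine (hindep.measure_iInter_pos (s := E) ?_ ?_).trans_le (measure_mono_ae ?_)
  · rintro (j | ⟨i, j⟩)
    · exact MeasurableSet.univ
    · fin_cases j
      exacts [⟨{v | ∑ k ∈ Finset.range (M i), |v k - q i k| < ε / 5},
          measurableSet_lt (by fun_prop) measurable_const, rfl⟩,
        ⟨_, .pi (Finset.countable_toSet _) fun _ _ => measurableSet_singleton true, rfl⟩,
        ⟨_, .pi (Finset.countable_toSet _) fun _ _ => measurableSet_ball, rfl⟩,
        MeasurableSet.univ]
  · rintro (j | ⟨i, j⟩)
    · simp [E]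
    · fin_cases j
      · exact (hw i).measure_sum_abs_sub_lt_pos hα (hq i) (hq1 i) hδ
      · exact (hBiid i).measure_pi_preimage_pos (fun _ _ => measurableSet_singleton true)
          fun k _ => (ENNReal.ofReal_pos.2 hκ0).trans_eq (hBlaw i k).symm
      · refine (hξiid i).measure_pi_preimage_pos (fun _ _ => measurableSet_ball) fun k _ => ?_
        rw [← Measure.map_apply (hξmeas i k) measurableSet_ball, hξlaw i k]
        exact hG₀supp _ Metric.isOpen_ball ⟨_, Metric.mem_ball_self hδ⟩
      · simp [E]
  · filter_upwards [ae_all_iff.2 fun i => (hw i).ae_nonneg_and_sum_range_le_one] with ω hω hωE i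
    have hωE : ∀ j : Fin 4, ω ∈ E (Sum.inr (i, j)) := fun j => Set.mem_iInter.1 hωE _
    have hB : ∀ k ∈ Finset.range (M i), B i k ω = true := hωE 1
    have hξ : ∀ k ∈ Finset.range (M i), dist (ξ i k ω) (x i k) < ε / 5 := hωE 2
    refine levyProkhorovDist_sum_dirac_lt (hqg i) (hqδ i) (hω i).1 (hω i).2 (fun k hk => ?_)
      (hωE 0).le (by linarith)
    rw [hθ, if_pos (hB k (Finset.mem_range.2 hk))]
    exact (hξ k (Finset.mem_range.2 hk)).le

/-- Full weak support of the semi-hierarchical Dirichlet process `semiHDP(α, γ, κ, G₀, G₀₀)`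
with `κ ∈ (0, 1]` and `G₀` of full topological support, in its stick-breaking representation:
for all Borel probability measures `g_1, …, g_I` and every `ε > 0`, the event that every
`F_i` lies within Lévy–Prokhorov distance `ε` of `g_i` has strictly positive probability. -/
theorem semiHDP_full_weak_support
    (Θ : Type*) [MetricSpace Θ] [SeparableSpace Θ] [CompleteSpace Θ]
    [MeasurableSpace Θ] [BorelSpace Θ]
    (I : ℕ) (hI : 1 ≤ I)
    {Ω : Type*} [MeasurableSpace Ω] (P : Measure Ω) [IsProbabilityMeasure P]
    (α : ℝ) (hα : 0 < α) (γ : ℝ) (hγ : 0 < γ) (κ : ℝ) (hκ0 : 0 < κ) (hκ1 : κ ≤ 1)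
    (G₀ G₀₀ : Measure Θ) [IsProbabilityMeasure G₀] [IsProbabilityMeasure G₀₀]
    (hG₀supp : ∀ U : Set Θ, IsOpen U → U.Nonempty → 0 < G₀ U)
    (p : ℕ → Ω → ℝ) (τ : ℕ → Ω → Θ)
    (w : Fin I → ℕ → Ω → ℝ) (B : Fin I → ℕ → Ω → Bool)
    (ξ : Fin I → ℕ → Ω → Θ) (V : Fin I → ℕ → Ω → ℝ)
    (hp : IsStickBreaking P γ p)
    (hpmeas : ∀ h, Measurable (p h))
    (hτmeas : ∀ h, Measurable (τ h))
    (hτiid : iIndepFun τ P)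
    (hτlaw : ∀ h, Measure.map (τ h) P = G₀₀)
    (hw : ∀ i, IsStickBreaking P α (w i))
    (hwmeas : ∀ i h, Measurable (w i h))
    (hBmeas : ∀ i h, Measurable (B i h))
    (hBiid : ∀ i, iIndepFun (B i) P)
    (hBlaw : ∀ i h, P {ω | B i h ω = true} = ENNReal.ofReal κ)
    (hξmeas : ∀ i h, Measurable (ξ i h))
    (hξiid : ∀ i, iIndepFun (ξ i) P)
    (hξlaw : ∀ i h, Measure.map (ξ i h) P = G₀)
    (hVmeas : ∀ i h, Measurable (V i h))
    (hViid : ∀ i, iIndepFun (V i) P)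
    (hVlaw : ∀ i h, Measure.map (V i h) P = volume.restrict (Set.Ioo (0 : ℝ) 1))
    (hindep : iIndep
      (Sum.elim
        ![MeasurableSpace.comap (fun ω => fun h => p h ω) inferInstance,
          MeasurableSpace.comap (fun ω => fun h => τ h ω) inferInstance]
        (fun iv : Fin I × Fin 4 =>
          ![MeasurableSpace.comap (fun ω => fun h => w iv.1 h ω) inferInstance,
            MeasurableSpace.comap (fun ω => fun h => B iv.1 h ω) inferInstance,
            MeasurableSpace.comap (fun ω => fun h => ξ iv.1 h ω) inferInstance,
            MeasurableSpace.comap (fun ω => fun h => V iv.1 h ω) inferInstance] iv.2)) P)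
    (θ : Fin I → ℕ → Ω → Θ)
    (hθ : ∀ i h ω, θ i h ω =
      if B i h ω = true then ξ i h ω else τ (catIndex p (V i h) ω) ω) :
    ∀ g : Fin I → Measure Θ, (∀ i, IsProbabilityMeasure (g i)) → ∀ ε : ℝ, 0 < ε →
      0 < P {ω | ∀ i : Fin I, levyProkhorovDist
        (Measure.sum fun h : ℕ => ENNReal.ofReal (w i h ω) • Measure.dirac (θ i h ω))
        (g i) < ε} :=
  semiHDP_full_weak_support_general Θ I P α hα κ hκ0 G₀ hG₀supp p τ w B ξ V hw hBiid hBlaw hξmeas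
    hξiid hξlaw hindep θ hθ
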